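/- arXiv:1902.09905 — 6 statements merged into one kernel-verified Lean document; each statement's English description precedes it below -/
import Mathlib

section
/- Let Σ be the 3×3 matrix with σ11 = θ1+θ4+θ5, σ22 = θ2+θ4+θ5, σ33 = θ3+θ5, σ12 = θ4+θ5, σ13 = σ23 = θ5 (covariance matrix of the 3-leaf tree with clade {1,2}). Let K = Σ^{-1} and define p_ij = -κ_ij for 1≤i<j≤3 and p_0i = Σ_j κ_ij. Then det(Σ)·Σ^{-1} has entries whose transformed coordinates satisfy: p01·detΣ = θ2θ3, p02·detΣ = θ1θ3, p03·detΣ = θ1θ2+θ1θ4+θ2θ4, p12·detΣ = θ3θ4+θ3θ5+θ4θ5, p13·detΣ = θ2θ5, p23·detΣ = θ1θ5. -/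
theorem stmt_2 (θ1 θ2 θ3 θ4 θ5 : ℝ)
    (S : Matrix (Fin 3) (Fin 3) ℝ)
    (hS : S = !![θ1 + θ4 + θ5, θ4 + θ5, θ5;
                 θ4 + θ5, θ2 + θ4 + θ5, θ5;
                 θ5, θ5, θ3 + θ5])
    (hdet : S.det ≠ 0) (K : Matrix (Fin 3) (Fin 3) ℝ) (hK : K = S⁻¹) :
    (K 0 0 + K 0 1 + K 0 2) * S.det = θ2 * θ3 ∧
    (K 1 0 + K 1 1 + K 1 2) * S.det = θ1 * θ3 ∧
    (K 2 0 + K 2 1 + K 2 2) * S.det = θ1 * θ2 + θ1 * θ4 + θ2 * θ4 ∧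
    (-(K 0 1)) * S.det = θ3 * θ4 + θ3 * θ5 + θ4 * θ5 ∧
    (-(K 0 2)) * S.det = θ2 * θ5 ∧
    (-(K 1 2)) * S.det = θ1 * θ5 := by
  subst hK hS
  rw [Matrix.inv_def]
  simp only [Matrix.adjugate_fin_three_of, Matrix.smul_apply,
    Matrix.of_apply, Matrix.cons_val', Matrix.cons_val_zero, Matrix.cons_val_one,
    Matrix.head_cons, Matrix.head_fin_const, Matrix.empty_val', Matrix.cons_val_fin_one,
    smul_eq_mul, Ring.inverse_eq_inv']
  rw [Matrix.det_fin_three] at hdet ⊢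
  simp only [Matrix.cons_val', Matrix.cons_val_zero, Matrix.cons_val_one, Matrix.head_cons,
    Matrix.empty_val', Matrix.cons_val_fin_one, Matrix.cons_val_two, Matrix.tail_cons,
    Matrix.of_apply, Matrix.head_fin_const] at hdet ⊢
  generalize (θ1 + θ4 + θ5) * (θ2 + θ4 + θ5) * (θ3 + θ5) - (θ1 + θ4 + θ5) * θ5 * θ5 - (θ4 + θ5) * (θ4 + θ5) * (θ3 + θ5) + (θ4 + θ5) * θ5 * θ5 + θ5 * (θ4 + θ5) * θ5 - θ5 * (θ2 + θ4 + θ5) * θ5 = D at hdet ⊢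
  refine ⟨?_, ?_, ?_, ?_, ?_, ?_⟩ <;> field_simp <;> ring
end

section
/- For the 3-leaf Brownian motion tree model with clade {1,2} (covariance matrix with σ13 = σ23), the coordinates of the inverse satisfy the binomial relation p01·p23 = p02·p13, i.e., κ11κ23 − κ12κ13 + κ12κ23 − κ13κ22 = 0 where K = Σ^{-1}. -/
/-!
Both halves of `K₀₀K₁₂ - K₀₁K₀₂ + K₀₁K₁₂ - K₀₂K₁₁` are 2×2 minors of `K = S⁻¹`, i.e. entries of
`adj K = S / det S` (Jacobi's complementary-minor identity in size 3). They equal `-S₁₂ / det S` and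
`S₀₂ / det S`, so the sum vanishes exactly because `S₀₂ = S₁₂`, i.e. `σ₁₃ = σ₂₃` (indices start at 0).
-/

open Matrix

theorem Matrix.adjugate_nonsing_inv {n 𝕜 : Type*} [Fintype n] [DecidableEq n] [Nontrivial n]
    [Field 𝕜] (A : Matrix n n 𝕜) : A⁻¹.adjugate = A.det⁻¹ • A := by
  by_cases hA : A.det = 0
  · simp [nonsing_inv_apply_not_isUnit A (by simpa using hA), hA]
  have hA' : IsUnit A⁻¹.det := isUnit_nonsing_inv_det A (isUnit_iff_ne_zero.mpr hA)
  calc A⁻¹.adjugate = A⁻¹.adjugate * A⁻¹ * A⁻¹⁻¹ := by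
        rw [Matrix.mul_assoc, mul_nonsing_inv _ hA', Matrix.mul_one]
    _ = A.det⁻¹ • A := by
        rw [adjugate_mul, det_nonsing_inv, Ring.inverse_eq_inv', smul_mul, Matrix.one_mul,
          nonsing_inv_nonsing_inv A (isUnit_iff_ne_zero.mpr hA)]

theorem stmt_3_general (S : Matrix (Fin 3) (Fin 3) ℝ)
    (hsym : S.IsSymm) (hcl : S 0 2 = S 1 2)
    (K : Matrix (Fin 3) (Fin 3) ℝ) (hK : K = S⁻¹) :
    K 0 0 * K 1 2 - K 0 1 * K 0 2 + K 0 1 * K 1 2 - K 0 2 * K 1 1 = 0 := by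
  have hKsym : K 1 0 = K 0 1 := hK ▸ hsym.inv.apply 0 1
  have hadj : K.adjugate = S.det⁻¹ • S := hK ▸ S.adjugate_nonsing_inv
  have h02 := congrFun₂ hadj 0 2
  have h12 := congrFun₂ hadj 1 2
  simp only [adjugate_fin_three, of_apply, cons_val', cons_val_zero, cons_val_one, cons_val_two,
    head_cons, tail_cons, empty_val', cons_val_fin_one, Matrix.smul_apply, smul_eq_mul]
    at h02 h12
  rw [hKsym] at h12
  linear_combination h02 - h12 + S.det⁻¹ * hcl

theorem stmt_3 (S : Matrix (Fin 3) (Fin 3) ℝ)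
    (hsym : S.IsSymm) (hcl : S 0 2 = S 1 2)
    (hinv : IsUnit S.det) (K : Matrix (Fin 3) (Fin 3) ℝ) (hK : K = S⁻¹) :
    K 0 0 * K 1 2 - K 0 1 * K 0 2 + K 0 1 * K 1 2 - K 0 2 * K 1 1 = 0 :=
  stmt_3_general S hsym hcl K hK
end

section
/- For the 3-leaf Brownian motion tree model with clade {1,2}, the quantity (p03·p12 − p01·p23)·det(Σ) equals θ4, the length of the inner edge. -/
/-!
Write `K = det(Σ)⁻¹ • adj(Σ)`. The quantity `p₀₃ p₁₂ - p₀₁ p₂₃` is a quadratic form in the entries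
of `K`, so multiplied by `det Σ` it equals the same form evaluated at `adj Σ`, divided by `det Σ`.
For the Brownian motion tree covariance that form is `θ₄ · det Σ`, a polynomial identity.
-/

namespace BrownianMotionTree

variable {R : Type*} [CommRing R]

/-- `p₀₃ p₁₂ - p₀₁ p₂₃`, where `p_ij = -M i j` and `p₀ᵢ` is the `i`-th row sum of `M`
(indices `1, 2, 3` of the paper are `0, 1, 2` here). -/
def cladeForm (M : Matrix (Fin 3) (Fin 3) R) : R :=
  (M 2 0 + M 2 1 + M 2 2) * (-(M 0 1)) - (M 0 0 + M 0 1 + M 0 2) * (-(M 1 2))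

theorem cladeForm_smul (c : R) (M : Matrix (Fin 3) (Fin 3) R) :
    cladeForm (c • M) = c ^ 2 * cladeForm M := by
  simp only [cladeForm, Matrix.smul_apply, smul_eq_mul]
  ring

/-- The covariance matrix of the tree with leaf edges `θ₁, θ₂, θ₃`, inner edge `θ₄` above the
clade `{1, 2}`, and root edge `θ₅`. -/
def covariance (θ1 θ2 θ3 θ4 θ5 : R) : Matrix (Fin 3) (Fin 3) R :=
  !![θ1 + θ4 + θ5, θ4 + θ5, θ5;
     θ4 + θ5, θ2 + θ4 + θ5, θ5;
     θ5, θ5, θ3 + θ5]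

theorem cladeForm_adjugate_covariance (θ1 θ2 θ3 θ4 θ5 : R) :
    cladeForm (covariance θ1 θ2 θ3 θ4 θ5).adjugate =
      θ4 * (covariance θ1 θ2 θ3 θ4 θ5).det := by
  simp only [cladeForm, covariance, Matrix.adjugate_fin_three, Matrix.det_fin_three,
    Matrix.of_apply, Matrix.cons_val', Matrix.cons_val_zero, Matrix.cons_val_one,
    Matrix.cons_val_two, Matrix.empty_val', Matrix.cons_val_fin_one, Matrix.head_cons,
    Matrix.tail_cons, Matrix.head_fin_const]
  ring

end BrownianMotionTree

open BrownianMotionTree in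
theorem stmt_4 (θ1 θ2 θ3 θ4 θ5 : ℝ)
    (S : Matrix (Fin 3) (Fin 3) ℝ)
    (hS : S = !![θ1 + θ4 + θ5, θ4 + θ5, θ5;
                 θ4 + θ5, θ2 + θ4 + θ5, θ5;
                 θ5, θ5, θ3 + θ5])
    (hdet : S.det ≠ 0) (K : Matrix (Fin 3) (Fin 3) ℝ) (hK : K = S⁻¹) :
    ((K 2 0 + K 2 1 + K 2 2) * (-(K 0 1)) -
      (K 0 0 + K 0 1 + K 0 2) * (-(K 1 2))) * S.det = θ4 := by
  change cladeForm K * S.det = θ4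
  have hadj : cladeForm S.adjugate = θ4 * S.det := hS ▸ cladeForm_adjugate_covariance ..
  rw [hK, Matrix.inv_def, Ring.inverse_eq_inv', cladeForm_smul, hadj]
  field_simp
end

section
/- Let K be a positive definite 3×3 matrix with p_ij ≥ 0 for all 0 ≤ i < j ≤ 3 (where p_ij = -κ_ij and p_0i = Σ_j κ_ij), satisfying p01p23 = p02p13 ≤ p03p12. Then Σ = K^{-1} can be written as Σ = Σ_θ for the 3-leaf tree with clade {1,2} with all parameters θ1,...,θ5 nonnegative, i.e., σ13 = σ23, σ12 ≥ σ13 ≥ 0, σ11 ≥ σ12, σ22 ≥ σ12, σ33 ≥ σ13. -/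
/-!
Write `K = (κ_ij)` and `Σ = K⁻¹ = det(K)⁻¹ • adj(K)` with `det K > 0`. For a symmetric `3 × 3`
matrix each of the six claimed (in)equalities between entries of `adj K` is an exact polynomial
identity in the `p_ij` and the diagonal entries `κ_ii`: the differences of adjugate entries are
`p02 p13 - p01 p23`, `p03 p12 - p02 p13`, `κ33 p02 + p23 p03`, `κ33 p01 + p13 p03`,
`κ22 p01 + p12 p02`, and `adj(K)_13 = p12 p23 + κ22 p13` itself. The hypotheses make each of these
zero or nonnegative.
-/

namespace Matrix

section Adjugate

variable {R : Type*} [CommRing R] {K : Matrix (Fin 3) (Fin 3) R}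

namespace IsSymm

variable (hK : K.IsSymm)
include hK

theorem adjugate_fin_three_zero_two :
    K.adjugate 0 2 = -K 0 1 * -K 1 2 + -K 0 2 * K 1 1 := by
  simp [adjugate_fin_three, hK.apply 0 1]; ring

theorem adjugate_fin_three_zero_two_sub_one_two :
    K.adjugate 0 2 - K.adjugate 1 2 =
      (K 1 0 + K 1 1 + K 1 2) * -K 0 2 - (K 0 0 + K 0 1 + K 0 2) * -K 1 2 := by
  simp [adjugate_fin_three, hK.apply 0 1, hK.apply 0 2]; ring

theorem adjugate_fin_three_zero_one_sub_zero_two :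
    K.adjugate 0 1 - K.adjugate 0 2 =
      (K 2 0 + K 2 1 + K 2 2) * -K 0 1 - (K 1 0 + K 1 1 + K 1 2) * -K 0 2 := by
  simp [adjugate_fin_three, hK.apply 0 1, hK.apply 0 2, hK.apply 1 2]; ring

theorem adjugate_fin_three_zero_zero_sub_zero_one :
    K.adjugate 0 0 - K.adjugate 0 1 =
      K 2 2 * (K 1 0 + K 1 1 + K 1 2) + -K 1 2 * (K 2 0 + K 2 1 + K 2 2) := by
  simp [adjugate_fin_three, hK.apply 0 1, hK.apply 0 2, hK.apply 1 2]; ring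

theorem adjugate_fin_three_one_one_sub_zero_one :
    K.adjugate 1 1 - K.adjugate 0 1 =
      K 2 2 * (K 0 0 + K 0 1 + K 0 2) + -K 0 2 * (K 2 0 + K 2 1 + K 2 2) := by
  simp [adjugate_fin_three, hK.apply 0 2, hK.apply 1 2]; ring

theorem adjugate_fin_three_two_two_sub_zero_two :
    K.adjugate 2 2 - K.adjugate 0 2 =
      K 1 1 * (K 0 0 + K 0 1 + K 0 2) + -K 0 1 * (K 1 0 + K 1 1 + K 1 2) := by
  simp [adjugate_fin_three, hK.apply 0 1]; ring

end IsSymm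

end Adjugate

section Inverse

variable {n R : Type*} [Fintype n] [DecidableEq n]

theorem inv_apply_eq_det_inv_mul_adjugate [Field R] (K : Matrix n n R) (i j : n) :
    K⁻¹ i j = K.det⁻¹ * K.adjugate i j := by
  simp [inv_def, Ring.inverse_eq_inv']

variable [Field R] [LinearOrder R] [IsStrictOrderedRing R] {K : Matrix n n R} (hK : 0 < K.det)
include hK

theorem inv_apply_nonneg_of_adjugate_nonneg {i j : n} (h : 0 ≤ K.adjugate i j) : 0 ≤ K⁻¹ i j := by
  rw [inv_apply_eq_det_inv_mul_adjugate]
  exact mul_nonneg (inv_nonneg.2 hK.le) h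

theorem inv_apply_le_inv_apply_of_adjugate_le {i j k l : n}
    (h : K.adjugate i j ≤ K.adjugate k l) : K⁻¹ i j ≤ K⁻¹ k l := by
  simp only [inv_apply_eq_det_inv_mul_adjugate]
  exact mul_le_mul_of_nonneg_left h (inv_nonneg.2 hK.le)

end Inverse

end Matrix

open Matrix

theorem stmt_5 (K : Matrix (Fin 3) (Fin 3) ℝ) (hK : K.PosDef)
    (p01 p02 p03 p12 p13 p23 : ℝ)
    (hp01 : p01 = K 0 0 + K 0 1 + K 0 2)
    (hp02 : p02 = K 1 0 + K 1 1 + K 1 2)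
    (hp03 : p03 = K 2 0 + K 2 1 + K 2 2)
    (hp12 : p12 = -(K 0 1)) (hp13 : p13 = -(K 0 2)) (hp23 : p23 = -(K 1 2))
    (hn01 : 0 ≤ p01) (hn02 : 0 ≤ p02) (hn03 : 0 ≤ p03)
    (hn12 : 0 ≤ p12) (hn13 : 0 ≤ p13) (hn23 : 0 ≤ p23)
    (heq : p01 * p23 = p02 * p13) (hle : p02 * p13 ≤ p03 * p12)
    (S : Matrix (Fin 3) (Fin 3) ℝ) (hS : S = K⁻¹) :
    S 0 2 = S 1 2 ∧ S 0 2 ≤ S 0 1 ∧ 0 ≤ S 0 2 ∧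
      S 0 1 ≤ S 0 0 ∧ S 0 1 ≤ S 1 1 ∧ S 0 2 ≤ S 2 2 := by
  have hsymm : K.IsSymm := isHermitian_iff_isSymm.1 hK.isHermitian
  have hdet : 0 < K.det := hK.det_pos
  have h11 : 0 < K 1 1 := hK.diag_pos
  have h22 : 0 < K 2 2 := hK.diag_pos
  subst hS hp01 hp02 hp03 hp12 hp13 hp23
  have le_of_sub {i j k l : Fin 3} (h : 0 ≤ K.adjugate k l - K.adjugate i j) :
      K⁻¹ i j ≤ K⁻¹ k l :=
    inv_apply_le_inv_apply_of_adjugate_le hdet (sub_nonneg.1 h)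
  refine ⟨?_, le_of_sub ?_, inv_apply_nonneg_of_adjugate_nonneg hdet ?_,
    le_of_sub ?_, le_of_sub ?_, le_of_sub ?_⟩
  · have hadj : K.adjugate 0 2 = K.adjugate 1 2 :=
      sub_eq_zero.1 (by rw [hsymm.adjugate_fin_three_zero_two_sub_one_two]; linarith)
    simp only [inv_apply_eq_det_inv_mul_adjugate, hadj]
  · rw [hsymm.adjugate_fin_three_zero_one_sub_zero_two]; linarith
  · rw [hsymm.adjugate_fin_three_zero_two]; positivity
  · rw [hsymm.adjugate_fin_three_zero_zero_sub_zero_one]; positivity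
  · rw [hsymm.adjugate_fin_three_one_one_sub_zero_one]; positivity
  · rw [hsymm.adjugate_fin_three_two_two_sub_zero_two]; positivity
end

section
/- For the 4-leaf tree with clades {1,2} and {3,4} and Σ_θ as in the Brownian motion tree model, the p-coordinates of K = Σ_θ^{-1} satisfy the five toric binomial relations: p01p23 = p02p13, p01p24 = p02p14, p03p14 = p04p13, p03p24 = p04p23, and p13p24 = p14p23. -/
set_option maxHeartbeats 3200000 in
theorem stmt_14 (θ1 θ2 θ3 θ4 θ5 θ6 θ7 : ℝ)
    (S : Matrix (Fin 4) (Fin 4) ℝ)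
    (hS : S = !![θ1 + θ5 + θ7, θ5 + θ7, θ7, θ7;
                 θ5 + θ7, θ2 + θ5 + θ7, θ7, θ7;
                 θ7, θ7, θ3 + θ6 + θ7, θ6 + θ7;
                 θ7, θ7, θ6 + θ7, θ4 + θ6 + θ7])
    (hdet : S.det ≠ 0) (K : Matrix (Fin 4) (Fin 4) ℝ) (hK : K = S⁻¹)
    (p01 p02 p03 p04 p12 p13 p14 p23 p24 p34 : ℝ)
    (hp01 : p01 = ∑ j, K 0 j) (hp02 : p02 = ∑ j, K 1 j)
    (hp03 : p03 = ∑ j, K 2 j) (hp04 : p04 = ∑ j, K 3 j)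
    (hp12 : p12 = -(K 0 1)) (hp13 : p13 = -(K 0 2)) (hp14 : p14 = -(K 0 3))
    (hp23 : p23 = -(K 1 2)) (hp24 : p24 = -(K 1 3)) (hp34 : p34 = -(K 2 3)) :
    p01 * p23 = p02 * p13 ∧
    p01 * p24 = p02 * p14 ∧
    p03 * p14 = p04 * p13 ∧
    p03 * p24 = p04 * p23 ∧
    p13 * p24 = p14 * p23 := by
  have hE : ∀ i j, K i j = S.det⁻¹ * S.adjugate i j := by
    intro i j
    rw [hK, Matrix.inv_def]
    simp [Ring.inverse_eq_inv']
  have s00 : ((0:Fin 4).succAbove (0:Fin 3)) = 1 := by decide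
  have s01 : ((0:Fin 4).succAbove (1:Fin 3)) = 2 := by decide
  have s02 : ((0:Fin 4).succAbove (2:Fin 3)) = 3 := by decide
  have s10 : ((1:Fin 4).succAbove (0:Fin 3)) = 0 := by decide
  have s11 : ((1:Fin 4).succAbove (1:Fin 3)) = 2 := by decide
  have s12 : ((1:Fin 4).succAbove (2:Fin 3)) = 3 := by decide
  have s20 : ((2:Fin 4).succAbove (0:Fin 3)) = 0 := by decide
  have s21 : ((2:Fin 4).succAbove (1:Fin 3)) = 1 := by decide
  have s22 : ((2:Fin 4).succAbove (2:Fin 3)) = 3 := by decide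
  have s30 : ((3:Fin 4).succAbove (0:Fin 3)) = 0 := by decide
  have s31 : ((3:Fin 4).succAbove (1:Fin 3)) = 1 := by decide
  have s32 : ((3:Fin 4).succAbove (2:Fin 3)) = 2 := by decide
  have v0 : ((0:Fin 4):ℕ) = 0 := rfl
  have v1 : ((1:Fin 4):ℕ) = 1 := rfl
  have v2 : ((2:Fin 4):ℕ) = 2 := rfl
  have v3 : ((3:Fin 4):ℕ) = 3 := rfl
  subst hp01 hp02 hp03 hp04 hp12 hp13 hp14 hp23 hp24 hp34
  simp only [Fin.sum_univ_four, hE, Matrix.adjugate_fin_succ_eq_det_submatrix,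
    Matrix.det_fin_three, Matrix.submatrix_apply, s00, s01, s02, s10, s11, s12, s20, s21, s22,
    s30, s31, s32, v0, v1, v2, v3, hS]
  simp only [Matrix.cons_val', Matrix.cons_val_zero, Matrix.cons_val_one, Matrix.head_cons,
    Matrix.empty_val', Matrix.cons_val_fin_one, Matrix.head_fin_const, Matrix.cons_val_two,
    Matrix.cons_val_three, Matrix.tail_cons, Matrix.of_apply]
  norm_num
  refine ⟨by ring, by ring, by ring, by ring, by ring⟩
end

section
/- For the 4-leaf tree with clades {1,2} and {3,4}, the quantity (p12·p34 − p14·p23)·det(Σ_θ) equals θ5θ6 + θ5θ7 + θ6θ7; in particular it is nonnegative when θ5, θ6, θ7 ≥ 0. -/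
/-!
By Jacobi's complementary minor theorem, a 2 × 2 minor of `Σ⁻¹` times `det Σ` is the complementary
2 × 2 minor of `Σ`. Since `Σ⁻¹` is symmetric, `p12 p34 - p14 p23` is the minor of `Σ⁻¹` on rows
`{1, 3}` and columns `{2, 4}`, so the product equals `σ12 σ34 - σ14 σ32 = (θ5 + θ7)(θ6 + θ7) - θ7²`.
-/

namespace Matrix

variable {R : Type*} [CommRing R]

theorem det_submatrix_adjugate_fin_four (S : Matrix (Fin 4) (Fin 4) R) :
    ((adjugate S).submatrix ![0, 2] ![1, 3]).det = S.det * (S.submatrix ![0, 2] ![1, 3]).det := by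
  simp only [submatrix_apply, adjugate_fin_succ_eq_det_submatrix, det_succ_row_zero,
    Fin.sum_univ_succ]
  simp [Fin.succAbove, Fin.lt_def]
  ring

theorem det_submatrix_inv_mul_det_fin_four (S : Matrix (Fin 4) (Fin 4) R) (hS : IsUnit S.det) :
    (S⁻¹.submatrix ![0, 2] ![1, 3]).det * S.det = (S.submatrix ![0, 2] ![1, 3]).det := by
  have hinv : Ring.inverse S.det * S.det = 1 := Ring.inverse_mul_cancel _ hS
  rw [inv_def, submatrix_smul, Pi.smul_apply, Pi.smul_apply, det_smul, Fintype.card_fin,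
    det_submatrix_adjugate_fin_four]
  linear_combination (Ring.inverse S.det * S.det + 1) * (S.submatrix ![0, 2] ![1, 3]).det * hinv

end Matrix

theorem stmt_15 (θ1 θ2 θ3 θ4 θ5 θ6 θ7 : ℝ)
    (S : Matrix (Fin 4) (Fin 4) ℝ)
    (hS : S = !![θ1 + θ5 + θ7, θ5 + θ7, θ7, θ7;
                 θ5 + θ7, θ2 + θ5 + θ7, θ7, θ7;
                 θ7, θ7, θ3 + θ6 + θ7, θ6 + θ7;
                 θ7, θ7, θ6 + θ7, θ4 + θ6 + θ7])
    (hdet : S.det ≠ 0) (K : Matrix (Fin 4) (Fin 4) ℝ) (hK : K = S⁻¹)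
    (p12 p14 p23 p34 : ℝ)
    (hp12 : p12 = -(K 0 1)) (hp14 : p14 = -(K 0 3))
    (hp23 : p23 = -(K 1 2)) (hp34 : p34 = -(K 2 3)) :
    (p12 * p34 - p14 * p23) * S.det = θ5 * θ6 + θ5 * θ7 + θ6 * θ7 ∧
    (0 ≤ θ5 → 0 ≤ θ6 → 0 ≤ θ7 → 0 ≤ (p12 * p34 - p14 * p23) * S.det) := by
  have hK_symm : K 2 1 = K 1 2 := by
    have hS_symm : S.transpose = S := by
      rw [hS]; ext i j; fin_cases i <;> fin_cases j <;> rfl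
    rw [hK, ← Matrix.transpose_apply S⁻¹, Matrix.transpose_nonsing_inv, hS_symm]
  have hminor : p12 * p34 - p14 * p23 = (K.submatrix ![0, 2] ![1, 3]).det := by
    rw [Matrix.det_fin_two]
    simp [hp12, hp14, hp23, hp34, hK_symm]
  have key : (p12 * p34 - p14 * p23) * S.det = θ5 * θ6 + θ5 * θ7 + θ6 * θ7 := by
    rw [hminor, hK, Matrix.det_submatrix_inv_mul_det_fin_four S (Ne.isUnit hdet), hS,
      Matrix.det_fin_two]
    simp only [Fin.isValue, Matrix.submatrix_apply, Matrix.of_apply, Matrix.cons_val',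
      Matrix.cons_val_zero, Matrix.cons_val_one, Matrix.cons_val_fin_one, Matrix.cons_val]
    ring
  exact ⟨key, fun h5 h6 h7 => key ▸ by positivity⟩
end
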